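/- arXiv:2003.09195 — 4 statements merged into one kernel-verified Lean document; each statement's English description precedes it below -/
import Mathlib

section
/- Let X ∈ ℝ^{n×p} be a matrix each of whose columns has unit Euclidean norm, and let W ∈ ℝ^{p×r}. Then ‖W‖_F ≤ ‖𝒜_X(W)‖_* ≤ √r · ‖W‖_{2,1}, where ‖·‖_F is the Frobenius norm, ‖·‖_* is the nuclear norm and ‖W‖_{2,1} = Σ_{j=1}^p ‖W_{j·}‖₂ is the sum of the Euclidean norms of the rows of W. -/
open Matrix

/-- Euclidean norm of a vector. -/
noncomputable def eucNorm {n : Type*} [Fintype n] (x : n → ℝ) : ℝ :=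
  Real.sqrt (∑ i, x i ^ 2)

/-- Frobenius norm of a matrix. -/
noncomputable def frob {m n : Type*} [Fintype m] [Fintype n] (A : Matrix m n ℝ) : ℝ :=
  Real.sqrt (∑ i, ∑ j, A i j ^ 2)

/-- Frobenius inner product ⟨A, B⟩_F = tr(Aᵀ B). -/
noncomputable def frobInner {m n : Type*} [Fintype m] [Fintype n]
    (A B : Matrix m n ℝ) : ℝ :=
  (Aᵀ * B).trace

/-- The ℓ₂ → ℓ₂ operator (spectral) norm of a matrix. -/
noncomputable def opNorm {m n : Type*} [Fintype m] [Fintype n] [DecidableEq n]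
    (M : Matrix m n ℝ) : ℝ :=
  ‖LinearMap.toContinuousLinearMap (Matrix.toEuclideanLin M)‖

/-- The nuclear norm, defined by duality with the operator norm:
‖A‖_* = sup { ⟨M, A⟩_F : ‖M‖_op ≤ 1 }. -/
noncomputable def nuclearNorm {m n : Type*} [Fintype m] [Fintype n] [DecidableEq n]
    (A : Matrix m n ℝ) : ℝ :=
  sSup {c : ℝ | ∃ M : Matrix m n ℝ, opNorm M ≤ 1 ∧ c = frobInner M A}

/-- The operator 𝒜_X : ℝ^{p×r} → ℝ^{n×(pr)}, W ↦ (X·Diag(W_{·1}), …, X·Diag(W_{·r})),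
where the column ((i-1)p + j) of the concatenation is indexed by the pair (i, j). -/
noncomputable def traceLassoOp {n p r : ℕ} (X : Matrix (Fin n) (Fin p) ℝ)
    (W : Matrix (Fin p) (Fin r) ℝ) : Matrix (Fin n) (Fin r × Fin p) ℝ :=
  fun a ij => X a ij.2 * W ij.2 ij.1

/-!
Testing the nuclear norm of `A` against `M = A / ‖A‖_F`, whose operator norm is at most its
Frobenius norm `1`, gives `‖A‖_F ≤ ‖A‖_*`. Conversely, if `‖M‖_op ≤ 1` then every column of `M`
has norm at most `1`, so `⟨M, A⟩_F = ∑_c ⟨M e_c, A e_c⟩ ≤ ∑_c ‖A e_c‖`: the nuclear norm is at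
most the sum of the column norms. The column `(i, j)` of `𝒜_X(W)` is `W_{ji} X_{·j}`, of norm
`|W_{ji}|`; hence `‖𝒜_X(W)‖_F = ‖W‖_F`, and the sum of its column norms is
`∑_j ‖W_{j·}‖₁ ≤ √r ∑_j ‖W_{j·}‖₂`.
-/

section ColumnBounds

variable {m n : Type*} [Fintype m] [Fintype n]

lemma eucNorm_nonneg (x : n → ℝ) : 0 ≤ eucNorm x := Real.sqrt_nonneg _

lemma eucNorm_eq_norm_toLp (x : n → ℝ) : eucNorm x = ‖WithLp.toLp 2 x‖ := by
  simp [eucNorm, EuclideanSpace.norm_eq]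

lemma eucNorm_mul_const (x : n → ℝ) (c : ℝ) :
    eucNorm (fun i => x i * c) = eucNorm x * |c| := by
  simp_rw [eucNorm, mul_pow, ← Finset.sum_mul,
    Real.sqrt_mul (Finset.sum_nonneg fun i _ => sq_nonneg (x i)), Real.sqrt_sq_eq_abs]

lemma sum_abs_le_sqrt_card_mul_eucNorm (x : n → ℝ) :
    ∑ i, |x i| ≤ Real.sqrt (Fintype.card n) * eucNorm x := by
  rw [eucNorm, ← Real.sqrt_mul (Nat.cast_nonneg _)]
  apply Real.le_sqrt_of_sq_le
  simpa only [sq_abs, Finset.card_univ] using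
    sq_sum_le_card_mul_sum_sq (s := Finset.univ) (f := fun i => |x i|)

lemma frobInner_eq_sum_col (A B : Matrix m n ℝ) :
    frobInner A B = ∑ j, ∑ i, A i j * B i j := by
  simp [frobInner, Matrix.trace, Matrix.mul_apply]

lemma frobInner_self (A : Matrix m n ℝ) : frobInner A A = frob A ^ 2 := by
  rw [frobInner_eq_sum_col, Finset.sum_comm, frob,
    Real.sq_sqrt (Finset.sum_nonneg fun i _ => Finset.sum_nonneg fun j _ => sq_nonneg (A i j))]
  simp only [sq]

lemma frobInner_smul_left (c : ℝ) (A B : Matrix m n ℝ) :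
    frobInner (c • A) B = c * frobInner A B := by
  simp [frobInner]

lemma frob_eq_sqrt_sum_eucNorm_col_sq (A : Matrix m n ℝ) :
    frob A = Real.sqrt (∑ j, eucNorm (A.col j) ^ 2) := by
  rw [frob, Finset.sum_comm]
  congr 1
  refine Finset.sum_congr rfl fun j _ => ?_
  rw [eucNorm, Real.sq_sqrt (Finset.sum_nonneg fun i _ => sq_nonneg _)]
  rfl

lemma eucNorm_mulVec_le_frob (M : Matrix m n ℝ) (x : n → ℝ) :
    eucNorm (M *ᵥ x) ≤ frob M * eucNorm x := by
  rw [eucNorm, eucNorm, frob, ← Real.sqrt_mul (Finset.sum_nonneg fun i _ =>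
    Finset.sum_nonneg fun j _ => sq_nonneg (M i j)), Finset.sum_mul]
  exact Real.sqrt_le_sqrt (Finset.sum_le_sum fun i _ => Finset.sum_mul_sq_le_sq_mul_sq _ _ _)

variable [DecidableEq n]

lemma eucNorm_mulVec_le (M : Matrix m n ℝ) (x : n → ℝ) :
    eucNorm (M *ᵥ x) ≤ opNorm M * eucNorm x := by
  rw [eucNorm_eq_norm_toLp, eucNorm_eq_norm_toLp]
  exact (LinearMap.toContinuousLinearMap (Matrix.toEuclideanLin M)).le_opNorm (WithLp.toLp 2 x)

lemma eucNorm_col_le_opNorm (M : Matrix m n ℝ) (j : n) : eucNorm (M.col j) ≤ opNorm M := by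
  have h := eucNorm_mulVec_le M (Pi.single j 1)
  have h_single : eucNorm (Pi.single j (1 : ℝ)) = 1 := by simp [eucNorm, sq, Pi.single_apply]
  rwa [mulVec_single_one, h_single, mul_one] at h

lemma opNorm_le_frob (M : Matrix m n ℝ) : opNorm M ≤ frob M :=
  ContinuousLinearMap.opNorm_le_bound _ (Real.sqrt_nonneg _) fun x => by
    have h := eucNorm_mulVec_le_frob M x.ofLp
    rwa [eucNorm_eq_norm_toLp, eucNorm_eq_norm_toLp, WithLp.toLp_ofLp] at h

lemma opNorm_smul (c : ℝ) (M : Matrix m n ℝ) : opNorm (c • M) = |c| * opNorm M := by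
  rw [opNorm, opNorm, map_smul, map_smul, norm_smul, Real.norm_eq_abs]

lemma zero_mem_nuclearNorm_set (A : Matrix m n ℝ) :
    (0 : ℝ) ∈ {c : ℝ | ∃ M : Matrix m n ℝ, opNorm M ≤ 1 ∧ c = frobInner M A} :=
  ⟨0, by simp [opNorm], by simp [frobInner]⟩

lemma frobInner_le_sum_eucNorm_col {M : Matrix m n ℝ} (hM : opNorm M ≤ 1) (A : Matrix m n ℝ) :
    frobInner M A ≤ ∑ j, eucNorm (A.col j) := by
  rw [frobInner_eq_sum_col]
  gcongr with j
  calc ∑ i, M i j * A i j ≤ eucNorm (M.col j) * eucNorm (A.col j) :=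
        Real.sum_mul_le_sqrt_mul_sqrt _ _ _
    _ ≤ eucNorm (A.col j) :=
        mul_le_of_le_one_left (eucNorm_nonneg _) ((eucNorm_col_le_opNorm M j).trans hM)

lemma bddAbove_nuclearNorm_set (A : Matrix m n ℝ) :
    BddAbove {c : ℝ | ∃ M : Matrix m n ℝ, opNorm M ≤ 1 ∧ c = frobInner M A} :=
  ⟨_, by rintro c ⟨M, hM, rfl⟩; exact frobInner_le_sum_eucNorm_col hM A⟩

lemma nuclearNorm_le_sum_eucNorm_col (A : Matrix m n ℝ) :
    nuclearNorm A ≤ ∑ j, eucNorm (A.col j) :=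
  csSup_le ⟨0, zero_mem_nuclearNorm_set A⟩ fun _ ⟨_, hM, hc⟩ =>
    hc ▸ frobInner_le_sum_eucNorm_col hM A

lemma frob_le_nuclearNorm (A : Matrix m n ℝ) : frob A ≤ nuclearNorm A := by
  -- no case split on `frob A = 0` is needed: then `c = 0`, and both facts below still hold
  set c := (frob A)⁻¹
  have hc : 0 ≤ c := inv_nonneg.mpr (Real.sqrt_nonneg _)
  have hop : opNorm (c • A) ≤ 1 := by
    rw [opNorm_smul, abs_of_nonneg hc]
    exact (mul_le_mul_of_nonneg_left (opNorm_le_frob A) hc).trans inv_mul_le_one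
  have hval : frobInner (c • A) A = frob A := by
    rw [frobInner_smul_left, frobInner_self, sq, ← mul_assoc, inv_mul_mul_self]
  exact le_csSup (bddAbove_nuclearNorm_set A) ⟨c • A, hop, hval.symm⟩

end ColumnBounds

section TraceLasso

variable {n p r : ℕ} {X : Matrix (Fin n) (Fin p) ℝ}

lemma eucNorm_col_traceLassoOp (hX : ∀ j : Fin p, eucNorm (fun a => X a j) = 1)
    (W : Matrix (Fin p) (Fin r) ℝ) (i : Fin r) (j : Fin p) :
    eucNorm ((traceLassoOp X W).col (i, j)) = |W j i| := by
  rw [← one_mul |W j i|, ← hX j]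
  exact eucNorm_mul_const _ _

lemma frob_traceLassoOp (hX : ∀ j : Fin p, eucNorm (fun a => X a j) = 1)
    (W : Matrix (Fin p) (Fin r) ℝ) : frob (traceLassoOp X W) = frob W := by
  rw [frob_eq_sqrt_sum_eucNorm_col_sq, Fintype.sum_prod_type, Finset.sum_comm]
  simp only [eucNorm_col_traceLassoOp hX, sq_abs]
  rfl

end TraceLasso

/-- If every column of X has unit Euclidean norm, then
‖W‖_F ≤ ‖𝒜_X(W)‖_* ≤ √r · ‖W‖_{2,1}. -/
theorem stmt_0 {n p r : ℕ} (X : Matrix (Fin n) (Fin p) ℝ) (W : Matrix (Fin p) (Fin r) ℝ)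
    (hX : ∀ j : Fin p, eucNorm (fun a => X a j) = 1) :
    frob W ≤ nuclearNorm (traceLassoOp X W) ∧
      nuclearNorm (traceLassoOp X W) ≤ Real.sqrt r * ∑ j : Fin p, eucNorm (W j) := by
  refine ⟨frob_traceLassoOp hX W ▸ frob_le_nuclearNorm (traceLassoOp X W), ?_⟩
  calc nuclearNorm (traceLassoOp X W)
      ≤ ∑ ij : Fin r × Fin p, |W ij.2 ij.1| := by
        simpa only [eucNorm_col_traceLassoOp hX] using
          nuclearNorm_le_sum_eucNorm_col (traceLassoOp X W)
    _ = ∑ j, ∑ i, |W j i| := by rw [Fintype.sum_prod_type, Finset.sum_comm]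
    _ ≤ ∑ j, Real.sqrt r * eucNorm (W j) := by
        gcongr with j
        simpa using sum_abs_le_sqrt_card_mul_eucNorm (W j)
    _ = Real.sqrt r * ∑ j : Fin p, eucNorm (W j) := (Finset.mul_sum _ _ _).symm
end

section
/- Let X ∈ ℝ^{n×p} be a matrix each of whose columns has unit Euclidean norm, let W ∈ ℝ^{p×r}, and let M ∈ ℝ^{n×(pr)} satisfy ‖M‖_op ≤ 1, where ‖·‖_op is the ℓ₂→ℓ₂ operator (spectral) norm. Then ⟨M, 𝒜_X(W)⟩_F ≤ √r · Σ_{j=1}^{p} ‖W_{j·}‖₂, where W_{j·} denotes the j-th row of W. -/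
open Matrix

/-- Euclidean norm of a vector. -/
noncomputable def euclidNorm {n : Type*} [Fintype n] (x : n → ℝ) : ℝ :=
  Real.sqrt (∑ i, x i ^ 2)

/-! Put `v j i = ∑ a, M a (i, j) * X a j`, so that `⟨M, 𝒜_X(W)⟩_F = ∑ j, ⟨W j, v j⟩`.
Every column of `M` has norm at most `‖M‖_op ≤ 1` and every column of `X` is a unit vector,
so `|v j i| ≤ 1` by Cauchy–Schwarz and hence `‖v j‖ ≤ √r`; Cauchy–Schwarz in each row `j`
then bounds the `j`-th term by `√r ‖W j‖`. -/

lemma euclidNorm_nonneg {ι : Type*} [Fintype ι] (x : ι → ℝ) : 0 ≤ euclidNorm x :=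
  Real.sqrt_nonneg _

lemma euclidNorm_eq_norm_toLp {ι : Type*} [Fintype ι] (x : ι → ℝ) :
    euclidNorm x = ‖WithLp.toLp 2 x‖ := by
  simp [euclidNorm, EuclideanSpace.norm_eq]

lemma abs_sum_mul_le_euclidNorm_mul {ι : Type*} [Fintype ι] (x y : ι → ℝ) :
    |∑ i, x i * y i| ≤ euclidNorm x * euclidNorm y := by
  rw [euclidNorm_eq_norm_toLp, euclidNorm_eq_norm_toLp]
  simpa [PiLp.inner_apply, mul_comm] using
    abs_real_inner_le_norm (WithLp.toLp 2 x) (WithLp.toLp 2 y)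

lemma euclidNorm_le_sqrt_card {ι : Type*} [Fintype ι] (x : ι → ℝ) (hx : ∀ i, |x i| ≤ 1) :
    euclidNorm x ≤ √(Fintype.card ι) := by
  refine Real.sqrt_le_sqrt ?_
  calc ∑ i, x i ^ 2 ≤ ∑ _i : ι, (1 : ℝ) :=
        Finset.sum_le_sum fun i _ => (sq_le_one_iff_abs_le_one _).2 (hx i)
    _ = Fintype.card ι := by simp

lemma euclidNorm_col_le_opNorm {m n : Type*} [Fintype m] [Fintype n] [DecidableEq n]
    (M : Matrix m n ℝ) (k : n) : euclidNorm (fun a => M a k) ≤ opNorm M := by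
  have h := (LinearMap.toContinuousLinearMap (toEuclideanLin M)).le_opNorm
    (EuclideanSpace.single k 1)
  have hcol : toEuclideanLin M (EuclideanSpace.single k 1) = WithLp.toLp 2 (fun a => M a k) := by
    change toEuclideanLin M (WithLp.toLp 2 (Pi.single k 1)) = _
    ext a
    simp [toLpLin_apply]
  simpa [euclidNorm_eq_norm_toLp, opNorm, hcol] using h

lemma frobInner_eq_sum {m n : Type*} [Fintype m] [Fintype n] (A B : Matrix m n ℝ) :
    frobInner A B = ∑ k, ∑ a, A a k * B a k := by
  simp [frobInner, Matrix.trace, Matrix.mul_apply]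

lemma frobInner_traceLassoOp {n p r : ℕ} (X : Matrix (Fin n) (Fin p) ℝ)
    (W : Matrix (Fin p) (Fin r) ℝ) (M : Matrix (Fin n) (Fin r × Fin p) ℝ) :
    frobInner M (traceLassoOp X W) = ∑ j, ∑ i, W j i * ∑ a, M a (i, j) * X a j := by
  rw [frobInner_eq_sum, Fintype.sum_prod_type, Finset.sum_comm]
  simp only [traceLassoOp, Finset.mul_sum]
  exact Finset.sum_congr rfl fun j _ => Finset.sum_congr rfl fun i _ =>
    Finset.sum_congr rfl fun a _ => by ring

/-- If each column of X has unit norm and ‖M‖_op ≤ 1, then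
⟨M, 𝒜_X(W)⟩_F ≤ √r · Σⱼ ‖W_{j·}‖₂. -/
theorem stmt_4 {n p r : ℕ} (X : Matrix (Fin n) (Fin p) ℝ) (W : Matrix (Fin p) (Fin r) ℝ)
    (M : Matrix (Fin n) (Fin r × Fin p) ℝ)
    (hX : ∀ j : Fin p, euclidNorm (fun a => X a j) = 1)
    (hM : opNorm M ≤ 1) :
    frobInner M (traceLassoOp X W) ≤ Real.sqrt r * ∑ j : Fin p, euclidNorm (W j) := by
  have hentry : ∀ j i, |∑ a, M a (i, j) * X a j| ≤ 1 := fun j i =>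
    calc |∑ a, M a (i, j) * X a j|
        ≤ euclidNorm (fun a => M a (i, j)) * euclidNorm (fun a => X a j) :=
          abs_sum_mul_le_euclidNorm_mul _ _
      _ ≤ 1 := by
          rw [hX j, mul_one]
          exact (euclidNorm_col_le_opNorm M (i, j)).trans hM
  rw [frobInner_traceLassoOp, Finset.mul_sum]
  gcongr with j
  calc ∑ i, W j i * ∑ a, M a (i, j) * X a j
      ≤ euclidNorm (W j) * euclidNorm (fun i => ∑ a, M a (i, j) * X a j) :=
        Real.sum_mul_le_sqrt_mul_sqrt _ _ _
    _ ≤ euclidNorm (W j) * √r := by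
        gcongr
        · exact euclidNorm_nonneg _
        · simpa using euclidNorm_le_sqrt_card _ (hentry j)
    _ = √r * euclidNorm (W j) := mul_comm _ _
end

section
/- Let X ∈ ℝ^{n×p} satisfy XᵀX = I_p (the columns of X are orthonormal), and let W ∈ ℝ^{p×r}. Then ‖𝒜_X(W)‖_* = ‖W‖_{2,1}, where ‖W‖_{2,1} = Σ_{j=1}^{p} ‖W_{j·}‖₂ is the sum of the Euclidean norms of the rows of W. -/
/-!
Write `𝒜_X(W) = X · B`, where `B` is block diagonal with the rows `W_j` as its blocks. Since
`XᵀX = I`, both `X` and `Xᵀ` are contractions, so `M ↦ XᵀM` and `N ↦ XN` match the dual pairings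
`⟨M, XB⟩_F` and `⟨N, B⟩_F` over operator-norm balls, and `‖XB‖_* = ‖B‖_*`. The rows of `B` are
orthogonal. For such a matrix, pairing with the row-normalised matrix (a contraction by Bessel's
inequality) gives the sum of the row norms, and no contraction does better because its rows have
norm at most one.
-/

open Matrix

/-- Euclidean norm of a vector. -/
noncomputable def enorm {n : Type*} [Fintype n] (x : n → ℝ) : ℝ :=
  Real.sqrt (∑ i, x i ^ 2)

open WithLp
open scoped Matrix.Norms.L2Operator RealInnerProductSpace

lemma sum_inner_sq_le_norm_sq_of_pairwise_orthogonal {ι E : Type*} [Fintype ι]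
    [NormedAddCommGroup E] [InnerProductSpace ℝ E] {u : ι → E}
    (hu : Pairwise fun i j => ⟪u i, u j⟫ = 0) (hu_le : ∀ i, ‖u i‖ ≤ 1) (x : E) :
    ∑ i, ⟪u i, x⟫ ^ 2 ≤ ‖x‖ ^ 2 := by
  set P := ∑ i, ⟪u i, x⟫ • u i
  have hPx : ⟪P, x⟫ = ∑ i, ⟪u i, x⟫ ^ 2 := by
    simp only [P, sum_inner, real_inner_smul_left, sq]
  have hP : ‖P‖ ^ 2 ≤ ∑ i, ⟪u i, x⟫ ^ 2 := by
    rw [← real_inner_self_eq_norm_sq]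
    calc ⟪P, P⟫ = ∑ i, ⟪u i, x⟫ ^ 2 * ‖u i‖ ^ 2 := by
          simp only [P, sum_inner, inner_sum, real_inner_smul_left, real_inner_smul_right]
          refine Finset.sum_congr rfl fun i _ => ?_
          rw [Finset.sum_eq_single i (fun j _ hji => by rw [hu hji, mul_zero, mul_zero]) (by simp),
            real_inner_self_eq_norm_sq]
          ring
      _ ≤ ∑ i, ⟪u i, x⟫ ^ 2 := Finset.sum_le_sum fun i _ =>
          mul_le_of_le_one_right (sq_nonneg _) (pow_le_one₀ (norm_nonneg _) (hu_le i))
  -- expand `0 ≤ ‖x - P‖ ^ 2`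
  nlinarith [norm_sub_sq_real x P, real_inner_comm x P, sq_nonneg ‖x - P‖]

section
variable {m n : Type*} [Fintype m] [Fintype n]

lemma frobInner_eq_sum_inner_rows (M A : Matrix m n ℝ) :
    frobInner M A = ∑ i, ⟪toLp 2 (M i), toLp 2 (A i)⟫ := by
  simp only [frobInner, trace, diag_apply, mul_apply, transpose_apply, PiLp.inner_apply,
    RCLike.inner_apply, conj_trivial]
  rw [Finset.sum_comm]
  simp_rw [mul_comm]

lemma norm_toLp_row_le_l2_opNorm [DecidableEq m] [DecidableEq n] (M : Matrix m n ℝ) (i : m) :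
    ‖toLp 2 (M i)‖ ≤ ‖M‖ := by
  have h := Mᵀ.l2_opNorm_mulVec (EuclideanSpace.single i 1)
  rw [← conjTranspose_eq_transpose_of_trivial, l2_opNorm_conjTranspose] at h
  simpa [row_def] using h

lemma frobInner_le_sum_norm_rows [DecidableEq m] [DecidableEq n] {M : Matrix m n ℝ}
    (hM : ‖M‖ ≤ 1) (A : Matrix m n ℝ) :
    frobInner M A ≤ ∑ i, ‖toLp 2 (A i)‖ := by
  rw [frobInner_eq_sum_inner_rows]
  refine Finset.sum_le_sum fun i _ => (real_inner_le_norm _ _).trans ?_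
  exact mul_le_of_le_one_left (norm_nonneg _) ((norm_toLp_row_le_l2_opNorm M i).trans hM)

lemma l2_opNorm_le_one_of_pairwise_orthogonal_rows [DecidableEq n] (M : Matrix m n ℝ)
    (hM : Pairwise fun i j => ⟪toLp 2 (M i), toLp 2 (M j)⟫ = 0)
    (hM_le : ∀ i, ‖toLp 2 (M i)‖ ≤ 1) : ‖M‖ ≤ 1 := by
  refine ContinuousLinearMap.opNorm_le_bound _ zero_le_one fun x => ?_
  rw [one_mul, ← sq_le_sq₀ (norm_nonneg _) (norm_nonneg _)]
  have hcoord : ∀ i, (M *ᵥ ofLp x) i = ⟪toLp 2 (M i), x⟫ := fun i => by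
    simp [mulVec, dotProduct, PiLp.inner_apply, mul_comm]
  simpa [EuclideanSpace.norm_sq_eq, hcoord] using
    sum_inner_sq_le_norm_sq_of_pairwise_orthogonal hM hM_le x

lemma nuclearNorm_of_pairwise_orthogonal_rows [DecidableEq n] (A : Matrix m n ℝ)
    (hA : Pairwise fun i j => ⟪toLp 2 (A i), toLp 2 (A j)⟫ = 0) :
    nuclearNorm A = ∑ i, ‖toLp 2 (A i)‖ := by
  classical
  set M : Matrix m n ℝ := fun i => ‖toLp 2 (A i)‖⁻¹ • A i
  have hM_row : ∀ i, toLp 2 (M i) = ‖toLp 2 (A i)‖⁻¹ • toLp 2 (A i) := fun i => rfl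
  have hM : opNorm M ≤ 1 := by
    refine l2_opNorm_le_one_of_pairwise_orthogonal_rows M (fun i j hij => ?_) fun i => ?_
    · simp [hM_row, real_inner_smul_left, real_inner_smul_right, hA hij]
    · rw [hM_row, norm_smul, norm_inv, norm_norm]
      exact inv_mul_le_one_of_le₀ le_rfl (norm_nonneg _)
  refine IsGreatest.csSup_eq ⟨⟨M, hM, ?_⟩, ?_⟩
  · rw [frobInner_eq_sum_inner_rows]
    refine Finset.sum_congr rfl fun i _ => ?_
    rw [hM_row, real_inner_smul_left, real_inner_self_eq_norm_sq]
    rcases eq_or_ne ‖toLp 2 (A i)‖ 0 with h | h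
    · simp [h]
    · field_simp
  · rintro c ⟨N, hN, rfl⟩
    exact frobInner_le_sum_norm_rows hN A

end

section
variable {k m n : Type*} [Fintype k] [Fintype m] [Fintype n] [DecidableEq m] [DecidableEq n]

lemma l2_opNorm_le_one_of_transpose_mul_self_eq_one {X : Matrix k m ℝ} (hX : Xᵀ * X = 1) :
    ‖X‖ ≤ 1 := by
  have h := l2_opNorm_conjTranspose_mul_self X
  rw [conjTranspose_eq_transpose_of_trivial, hX, ← diagonal_one, l2_opNorm_diagonal] at h
  have h1 : ‖fun _ : m => (1 : ℝ)‖ ≤ 1 := (pi_norm_le_iff_of_nonneg zero_le_one).2 fun _ => by simp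
  nlinarith [norm_nonneg X]

lemma nuclearNorm_mul_of_transpose_mul_self_eq_one {X : Matrix k m ℝ} (hX : Xᵀ * X = 1)
    (B : Matrix m n ℝ) : nuclearNorm (X * B) = nuclearNorm B := by
  classical
  have hX_le : ‖X‖ ≤ 1 := l2_opNorm_le_one_of_transpose_mul_self_eq_one hX
  have hXt_le : ‖Xᵀ‖ ≤ 1 := by
    rwa [← conjTranspose_eq_transpose_of_trivial, l2_opNorm_conjTranspose]
  unfold nuclearNorm
  congr 1
  ext c
  constructor
  · rintro ⟨M, hM, rfl⟩
    refine ⟨Xᵀ * M, (l2_opNorm_mul _ _).trans (mul_le_one₀ hXt_le (norm_nonneg _) hM), ?_⟩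
    simp [frobInner, transpose_mul, Matrix.mul_assoc]
  · rintro ⟨N, hN, rfl⟩
    refine ⟨X * N, (l2_opNorm_mul _ _).trans (mul_le_one₀ hX_le (norm_nonneg _) hN), ?_⟩
    rw [frobInner, frobInner, transpose_mul, Matrix.mul_assoc, ← Matrix.mul_assoc Xᵀ, hX,
      Matrix.one_mul]

end

section
variable {m k : Type*} [DecidableEq m]

def rowBlockDiagonal {α : Type*} [Zero α] (W : Matrix m k α) : Matrix m (k × m) α :=
  fun j il => if il.2 = j then W j il.1 else 0

variable [Fintype m] [Fintype k]

lemma rowBlockDiagonal_rows_pairwise_orthogonal (W : Matrix m k ℝ) :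
    Pairwise fun i j =>
      ⟪toLp 2 (rowBlockDiagonal W i), toLp 2 (rowBlockDiagonal W j)⟫ = 0 := by
  intro i j hij
  simp only [PiLp.inner_apply, rowBlockDiagonal, RCLike.inner_apply, conj_trivial]
  refine Finset.sum_eq_zero fun il _ => ?_
  split_ifs <;> simp_all

lemma norm_toLp_rowBlockDiagonal (W : Matrix m k ℝ) (j : m) :
    ‖toLp 2 (rowBlockDiagonal W j)‖ = ‖toLp 2 (W j)‖ := by
  simp [EuclideanSpace.norm_eq, rowBlockDiagonal, Fintype.sum_prod_type]

end

lemma traceLassoOp_eq_mul_rowBlockDiagonal {n p r : ℕ} (X : Matrix (Fin n) (Fin p) ℝ)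
    (W : Matrix (Fin p) (Fin r) ℝ) : traceLassoOp X W = X * rowBlockDiagonal W := by
  ext a ⟨i, j⟩
  simp [traceLassoOp, rowBlockDiagonal, mul_apply]

lemma enorm_eq_norm_toLp {n : Type*} [Fintype n] (x : n → ℝ) : _root_.enorm x = ‖toLp 2 x‖ := by
  simp [_root_.enorm, EuclideanSpace.norm_eq]

/-- If XᵀX = I_p then ‖𝒜_X(W)‖_* = ‖W‖_{2,1} = Σⱼ ‖W_{j·}‖₂. -/
theorem stmt_5 {n p r : ℕ} (X : Matrix (Fin n) (Fin p) ℝ) (W : Matrix (Fin p) (Fin r) ℝ)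
    (hX : Xᵀ * X = 1) :
    nuclearNorm (traceLassoOp X W) = ∑ j : Fin p, _root_.enorm (W j) := by
  rw [traceLassoOp_eq_mul_rowBlockDiagonal, nuclearNorm_mul_of_transpose_mul_self_eq_one hX,
    nuclearNorm_of_pairwise_orthogonal_rows _ (rowBlockDiagonal_rows_pairwise_orthogonal W)]
  simp only [norm_toLp_rowBlockDiagonal, enorm_eq_norm_toLp]
end

section
/- Let A ∈ ℝ^{p×p} be symmetric positive definite and let U ∈ ℝ^{p×r} satisfy UᵀAU = I_r. Then the matrices {AU(e_ie_jᵀ + e_je_iᵀ) : 1 ≤ i ≤ j ≤ r} ⊂ ℝ^{p×r} are linearly independent, where e_i ∈ ℝ^r is the i-th standard basis vector. -/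
open Matrix

/-!
Left multiplication by `Uᵀ` is a linear map sending `A U (eᵢeⱼᵀ + eⱼeᵢᵀ)` back to
`eᵢeⱼᵀ + eⱼeᵢᵀ`, because `Uᵀ A U = I`. These symmetric matrices are independent: the
upper-triangular entry `(i, j)` of the one indexed by `i ≤ j` is `1` (or `2` when `i = j`),
and all its other upper-triangular entries vanish.
-/

section

variable {n R : Type*} [LinearOrder n] [Semiring R]

theorem single_add_single_swap_apply_of_le {i j a b : n} (hij : i ≤ j) (hab : a ≤ b) :
    (single i j 1 + single j i 1 : Matrix n n R) a b =
      if (a, b) = (i, j) then (if i = j then 2 else 1) else 0 := by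
  by_cases h : (a, b) = (i, j)
  · obtain ⟨rfl, rfl⟩ := Prod.ext_iff.mp h
    by_cases hd : a = b
    · subst hd
      simp [one_add_one_eq_two]
    · simp [hd, single_apply_of_ne, Ne.symm hd]
  · have hfst : ¬(i = a ∧ j = b) := fun ⟨hia, hjb⟩ => h (by rw [hia, hjb])
    have hsnd : ¬(j = a ∧ i = b) := fun ⟨hja, hib⟩ =>
      have hji : j = i := le_antisymm (hja ▸ hib ▸ hab) hij
      h (by rw [← hja, ← hib, hji])
    rw [if_neg h, Matrix.add_apply, single_apply_of_ne _ _ _ _ _ hfst,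
      single_apply_of_ne _ _ _ _ _ hsnd, add_zero]

theorem linearIndependent_single_add_single_swap (h2 : IsUnit (2 : R)) :
    LinearIndependent R
      (fun q : {q : n × n // q.1 ≤ q.2} =>
        single q.1.1 q.1.2 1 + single q.1.2 q.1.1 (1 : R)) := by
  classical
  let upperEntries : Matrix n n R →ₗ[R] ({q : n × n // q.1 ≤ q.2} → R) :=
    LinearMap.pi fun q => entryLinearMap R R q.1.1 q.1.2
  let w : {q : n × n // q.1 ≤ q.2} → Rˣ := fun q => if q.1.1 = q.1.2 then h2.unit else 1
  refine .of_comp upperEntries ?_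
  convert (Pi.linearIndependent_single_one _ R).units_smul w using 1
  funext q p
  simp [upperEntries, w, single_add_single_swap_apply_of_le q.2 p.2, Pi.single_apply,
    Subtype.ext_iff]

end

theorem LinearIndependent.mul_left_of_mul_eq_one {ι m k l S : Type*} [Fintype m] [Fintype k]
    [DecidableEq k] [CommSemiring S] {B : Matrix k m S} {A : Matrix m k S} (hBA : B * A = 1)
    {v : ι → Matrix k l S} (hv : LinearIndependent S v) :
    LinearIndependent S (fun i => A * v i) :=
  .of_comp (mulLeftLinearMap l S B) <| by
    simpa [Function.comp_def, ← Matrix.mul_assoc, hBA] using hv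

theorem stmt_15_general {p r : ℕ} (A : Matrix (Fin p) (Fin p) ℝ)
    (U : Matrix (Fin p) (Fin r) ℝ) (hU : Uᵀ * A * U = 1) :
    LinearIndependent ℝ
      (fun q : {q : Fin r × Fin r // q.1 ≤ q.2} =>
        A * U * (Matrix.single q.1.1 q.1.2 (1 : ℝ)
          + Matrix.single q.1.2 q.1.1 (1 : ℝ))) :=
  (linearIndependent_single_add_single_swap (by norm_num)).mul_left_of_mul_eq_one
    (B := Uᵀ) (by rw [← Matrix.mul_assoc, hU])

/-- For A symmetric positive definite and UᵀAU = I_r, the matrices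
{AU(eᵢeⱼᵀ + eⱼeᵢᵀ) : 1 ≤ i ≤ j ≤ r} are linearly independent. -/
theorem stmt_15 {p r : ℕ} (A : Matrix (Fin p) (Fin p) ℝ) (hA : A.PosDef)
    (U : Matrix (Fin p) (Fin r) ℝ) (hU : Uᵀ * A * U = 1) :
    LinearIndependent ℝ
      (fun q : {q : Fin r × Fin r // q.1 ≤ q.2} =>
        A * U * (Matrix.single q.1.1 q.1.2 (1 : ℝ)
          + Matrix.single q.1.2 q.1.1 (1 : ℝ))) :=
  stmt_15_general A U hU
end
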